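/- arXiv:1712.03518 — 3 statements merged into one kernel-verified Lean document; each statement's English description precedes it below -/
import Mathlib

section
/- Let X and Y be independent nonnegative random variables and let R₁ ≥ R₂ > 0 be constants such that P(X > u) ≤ R₁/u and P(Y > u) ≤ R₂/u for all u > 0. Then E[min{X,Y}] ≤ R₂·(2 + ln(R₁/R₂)). -/
open MeasureTheory Set Real

/-!
By independence, `P(min{X,Y} > t) = P(X > t) P(Y > t)`, and the tail bounds together with the
trivial bound `1` on each factor dominate this product by `1`, `R₂ / t` and `R₁ R₂ / t²` on
`(0, R₂]`, `(R₂, R₁]` and `(R₁, ∞)`. Integrating the layer-cake formula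
`E[min{X,Y}] = ∫₀^∞ P(min{X,Y} > t) dt` piece by piece gives `R₂ + R₂ log(R₁/R₂) + R₂`.
-/

theorem ProbabilityTheory.IndepFun.measureReal_lt_min_eq_mul {Ω β : Type*}
    [MeasurableSpace Ω] {μ : Measure Ω} [LinearOrder β] [TopologicalSpace β]
    [OrderClosedTopology β] [MeasurableSpace β] [OpensMeasurableSpace β] {X Y : Ω → β}
    (hindep : IndepFun X Y μ) (t : β) :
    μ.real {ω | t < min (X ω) (Y ω)} = μ.real {ω | t < X ω} * μ.real {ω | t < Y ω} := by
  have hprod := hindep.measure_inter_preimage_eq_mul _ _ (measurableSet_Ioi (a := t))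
    (measurableSet_Ioi (a := t))
  simp only [preimage, mem_Ioi] at hprod
  simp only [measureReal_def, lt_min_iff, ofPred_and, hprod, ENNReal.toReal_mul]

noncomputable def minTailBound (R₁ R₂ t : ℝ) : ℝ :=
  if t ≤ R₂ then 1 else if t ≤ R₁ then R₂ / t else R₁ * R₂ / t ^ 2

section minTailBound

variable {R₁ R₂ : ℝ}

theorem mul_le_minTailBound {a b t : ℝ} (ha₀ : 0 ≤ a) (ha₁ : a ≤ 1) (hb₀ : 0 ≤ b) (hb₁ : b ≤ 1)
    (ha : a ≤ R₁ / t) (hb : b ≤ R₂ / t) : a * b ≤ minTailBound R₁ R₂ t := by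
  unfold minTailBound
  split_ifs
  · exact mul_le_one₀ ha₁ hb₀ hb₁
  · exact (mul_le_of_le_one_left hb₀ ha₁).trans hb
  · calc a * b ≤ R₁ / t * (R₂ / t) := mul_le_mul ha hb hb₀ (ha₀.trans ha)
      _ = R₁ * R₂ / t ^ 2 := by ring

theorem minTailBound_eqOn_Iic : EqOn (minTailBound R₁ R₂) 1 (Iic R₂) :=
  fun _ ht => if_pos ht

theorem minTailBound_eqOn_Ioc : EqOn (minTailBound R₁ R₂) (fun t => R₂ * t⁻¹) (Ioc R₂ R₁) :=
  fun _ ht => by rw [minTailBound, if_neg (not_le.2 ht.1), if_pos ht.2, div_eq_mul_inv]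

theorem minTailBound_eqOn_Ioi (hR₂ : 0 < R₂) (hR : R₂ ≤ R₁) :
    EqOn (minTailBound R₁ R₂) (fun t => R₁ * R₂ * t ^ (-2 : ℝ)) (Ioi R₁) := fun t ht => by
  have ht₀ : 0 < t := (hR₂.trans_le hR).trans ht
  dsimp only
  rw [minTailBound, if_neg (not_le.2 (hR.trans_lt ht)), if_neg (not_le.2 ht),
    rpow_neg ht₀.le, rpow_two, div_eq_mul_inv]

theorem integrableOn_minTailBound_Ioc_zero : IntegrableOn (minTailBound R₁ R₂) (Ioc 0 R₂) :=
  (integrableOn_const measure_Ioc_lt_top.ne).congr_fun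
    (minTailBound_eqOn_Iic.symm.mono Ioc_subset_Iic_self) measurableSet_Ioc

theorem setIntegral_minTailBound_Ioc_zero (hR₂ : 0 ≤ R₂) :
    ∫ t in Ioc 0 R₂, minTailBound R₁ R₂ t = R₂ := by
  rw [setIntegral_congr_fun measurableSet_Ioc (minTailBound_eqOn_Iic.mono Ioc_subset_Iic_self)]
  simp [hR₂]

theorem integrableOn_minTailBound_Ioc (hR₂ : 0 < R₂) :
    IntegrableOn (minTailBound R₁ R₂) (Ioc R₂ R₁) := by
  have hcont : ContinuousOn (fun t : ℝ => R₂ * t⁻¹) (Icc R₂ R₁) :=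
    continuousOn_const.mul (continuousOn_inv₀.mono fun _ ht => (hR₂.trans_le ht.1).ne')
  exact (hcont.integrableOn_Icc.mono_set Ioc_subset_Icc_self).congr_fun
    minTailBound_eqOn_Ioc.symm measurableSet_Ioc

theorem setIntegral_minTailBound_Ioc (hR₂ : 0 < R₂) (hR : R₂ ≤ R₁) :
    ∫ t in Ioc R₂ R₁, minTailBound R₁ R₂ t = R₂ * log (R₁ / R₂) := by
  rw [setIntegral_congr_fun measurableSet_Ioc minTailBound_eqOn_Ioc,
    ← intervalIntegral.integral_of_le hR, intervalIntegral.integral_const_mul,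
    integral_inv_of_pos hR₂ (hR₂.trans_le hR)]

theorem integrableOn_minTailBound_Ioi (hR₂ : 0 < R₂) (hR : R₂ ≤ R₁) :
    IntegrableOn (minTailBound R₁ R₂) (Ioi R₁) :=
  IntegrableOn.congr_fun
    ((integrableOn_Ioi_rpow_of_lt (by norm_num : (-2 : ℝ) < -1) (hR₂.trans_le hR)).const_mul _)
    (minTailBound_eqOn_Ioi hR₂ hR).symm measurableSet_Ioi

theorem setIntegral_minTailBound_Ioi (hR₂ : 0 < R₂) (hR : R₂ ≤ R₁) :
    ∫ t in Ioi R₁, minTailBound R₁ R₂ t = R₂ := by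
  have hR₁ : 0 < R₁ := hR₂.trans_le hR
  rw [setIntegral_congr_fun measurableSet_Ioi (minTailBound_eqOn_Ioi hR₂ hR), integral_const_mul,
    integral_Ioi_rpow_of_lt (by norm_num) hR₁]
  norm_num [rpow_neg_one]
  field_simp

theorem integrableOn_minTailBound (hR₂ : 0 < R₂) (hR : R₂ ≤ R₁) :
    IntegrableOn (minTailBound R₁ R₂) (Ioi 0) := by
  rw [← Ioc_union_Ioi_eq_Ioi hR₂.le, ← Ioc_union_Ioi_eq_Ioi hR]
  exact integrableOn_minTailBound_Ioc_zero.union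
    ((integrableOn_minTailBound_Ioc hR₂).union (integrableOn_minTailBound_Ioi hR₂ hR))

theorem integral_minTailBound (hR₂ : 0 < R₂) (hR : R₂ ≤ R₁) :
    ∫ t in Ioi 0, minTailBound R₁ R₂ t = R₂ * (2 + log (R₁ / R₂)) := by
  rw [← Ioc_union_Ioi_eq_Ioi hR₂.le, setIntegral_union Ioc_disjoint_Ioi_same measurableSet_Ioi
      integrableOn_minTailBound_Ioc_zero
      ((integrableOn_minTailBound hR₂ hR).mono_set (Ioi_subset_Ioi hR₂.le)),
    ← Ioc_union_Ioi_eq_Ioi hR, setIntegral_union Ioc_disjoint_Ioi_same measurableSet_Ioi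
      (integrableOn_minTailBound_Ioc hR₂) (integrableOn_minTailBound_Ioi hR₂ hR),
    setIntegral_minTailBound_Ioc_zero hR₂.le, setIntegral_minTailBound_Ioc hR₂ hR,
    setIntegral_minTailBound_Ioi hR₂ hR]
  ring

end minTailBound

theorem min_expectation_bound_general
    {Ω : Type*} [MeasurableSpace Ω] (μ : Measure Ω) [IsProbabilityMeasure μ]
    (X Y : Ω → ℝ)
    (hXnn : ∀ ω, 0 ≤ X ω) (hYnn : ∀ ω, 0 ≤ Y ω)
    (hindep : ProbabilityTheory.IndepFun X Y μ)
    (hint : Integrable (fun ω => min (X ω) (Y ω)) μ)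
    (R₁ R₂ : ℝ) (hR₂ : 0 < R₂) (hR : R₂ ≤ R₁)
    (hX' : ∀ u : ℝ, 0 < u → (μ {ω | u < X ω}).toReal ≤ R₁ / u)
    (hY' : ∀ u : ℝ, 0 < u → (μ {ω | u < Y ω}).toReal ≤ R₂ / u) :
    ∫ ω, min (X ω) (Y ω) ∂μ ≤ R₂ * (2 + Real.log (R₁ / R₂)) := by
  have hnn : 0 ≤ᵐ[μ] fun ω => min (X ω) (Y ω) := ae_of_all _ fun ω => le_min (hXnn ω) (hYnn ω)
  rw [hint.integral_eq_integral_meas_lt hnn, ← integral_minTailBound hR₂ hR]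
  refine integral_mono_of_nonneg (ae_of_all _ fun _ => measureReal_nonneg)
    (integrableOn_minTailBound hR₂ hR) ?_
  filter_upwards [ae_restrict_mem measurableSet_Ioi] with t ht
  rw [hindep.measureReal_lt_min_eq_mul]
  exact mul_le_minTailBound measureReal_nonneg measureReal_le_one measureReal_nonneg
    measureReal_le_one (hX' t ht) (hY' t ht)

theorem min_expectation_bound
    {Ω : Type*} [MeasurableSpace Ω] (μ : Measure Ω) [IsProbabilityMeasure μ]
    (X Y : Ω → ℝ) (hX : Measurable X) (hY : Measurable Y)
    (hXnn : ∀ ω, 0 ≤ X ω) (hYnn : ∀ ω, 0 ≤ Y ω)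
    (hindep : ProbabilityTheory.IndepFun X Y μ)
    (hint : Integrable (fun ω => min (X ω) (Y ω)) μ)
    (R₁ R₂ : ℝ) (hR₂ : 0 < R₂) (hR : R₂ ≤ R₁)
    (hX' : ∀ u : ℝ, 0 < u → (μ {ω | u < X ω}).toReal ≤ R₁ / u)
    (hY' : ∀ u : ℝ, 0 < u → (μ {ω | u < Y ω}).toReal ≤ R₂ / u) :
    ∫ ω, min (X ω) (Y ω) ∂μ ≤ R₂ * (2 + Real.log (R₁ / R₂)) :=
  min_expectation_bound_general μ X Y hXnn hYnn hindep hint R₁ R₂ hR₂ hR hX' hY'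
end

section
/- For real numbers 0 < u and 0 < R₂ ≤ R₁, the function g(u) = min{1, R₂/u, R₁R₂/u²} satisfies ∫₀^∞ g(u) du ≤ R₂(2 + ln(R₁/R₂)). -/
/-!
Bound the integrand by `1` on `(0, R₂]`, by `R₂ / u` on `(R₂, R₁]` and by `R₁ * R₂ / u ^ 2` on
`(R₁, ∞)`; these majorants integrate to `R₂`, `R₂ * log (R₁ / R₂)` and `R₂`.
-/

open MeasureTheory Set Real

lemma setIntegral_Ioi_eq_Ioc_add_Ioc_add_Ioi {f : ℝ → ℝ} {a b c : ℝ} (hab : a ≤ b) (hbc : b ≤ c)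
    (hf : IntegrableOn f (Ioi a)) :
    ∫ x in Ioi a, f x = (∫ x in Ioc a b, f x) + (∫ x in Ioc b c, f x) + ∫ x in Ioi c, f x := by
  have hfb : IntegrableOn f (Ioi b) := hf.mono_set (Ioi_subset_Ioi hab)
  rw [← Ioc_union_Ioi_eq_Ioi hab, setIntegral_union (Ioc_disjoint_Ioi le_rfl) measurableSet_Ioi
    (hf.mono_set Ioc_subset_Ioi_self) hfb, ← Ioc_union_Ioi_eq_Ioi hbc,
    setIntegral_union (Ioc_disjoint_Ioi le_rfl) measurableSet_Ioi
    (hfb.mono_set Ioc_subset_Ioi_self) (hfb.mono_set (Ioi_subset_Ioi hbc)), add_assoc]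

lemma integrableOn_Ioc_const_div (c : ℝ) {a b : ℝ} (ha : 0 < a) :
    IntegrableOn (fun x : ℝ => c / x) (Ioc a b) :=
  (continuousOn_const.div continuousOn_id fun _ hx => (ha.trans_le hx.1).ne').integrableOn_Icc
    |>.mono_set Ioc_subset_Icc_self

lemma integral_Ioc_const_div (c : ℝ) {a b : ℝ} (ha : 0 < a) (hab : a ≤ b) :
    ∫ x in Ioc a b, c / x = c * log (b / a) := by
  simp_rw [div_eq_mul_inv c, ← intervalIntegral.integral_of_le hab]
  rw [intervalIntegral.integral_const_mul, integral_inv_of_pos ha (ha.trans_le hab)]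

lemma rpow_neg_two_eq_inv_sq {x : ℝ} (hx : 0 ≤ x) : x ^ (-2 : ℝ) = (x ^ 2)⁻¹ := by
  rw [rpow_neg hx, rpow_two]

lemma integrableOn_Ioi_const_div_sq (c : ℝ) {a : ℝ} (ha : 0 < a) :
    IntegrableOn (fun x : ℝ => c / x ^ 2) (Ioi a) := by
  refine IntegrableOn.congr_fun
    ((integrableOn_Ioi_rpow_of_lt (by norm_num : (-2 : ℝ) < -1) ha).const_mul c)
    (fun x hx => ?_) measurableSet_Ioi
  rw [rpow_neg_two_eq_inv_sq (ha.trans hx).le, div_eq_mul_inv]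

lemma integral_Ioi_const_div_sq (c : ℝ) {a : ℝ} (ha : 0 < a) :
    ∫ x in Ioi a, c / x ^ 2 = c / a := by
  rw [← setIntegral_congr_fun measurableSet_Ioi
    (fun x (hx : a < x) => by rw [div_eq_mul_inv, ← rpow_neg_two_eq_inv_sq (ha.trans hx).le]),
    integral_const_mul, integral_Ioi_rpow_of_lt (by norm_num) ha]
  norm_num [rpow_neg_one, div_eq_mul_inv]

noncomputable def survivalBound (R₁ R₂ u : ℝ) : ℝ := min 1 (min (R₂ / u) (R₁ * R₂ / u ^ 2))

section survivalBound

variable {R₁ R₂ : ℝ}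

lemma measurable_survivalBound : Measurable (survivalBound R₁ R₂) := by
  unfold survivalBound
  fun_prop

lemma survivalBound_nonneg (hR₁ : 0 ≤ R₁) (hR₂ : 0 ≤ R₂) {u : ℝ} (hu : 0 < u) :
    0 ≤ survivalBound R₁ R₂ u := by
  unfold survivalBound
  positivity

lemma survivalBound_le_one (u : ℝ) : survivalBound R₁ R₂ u ≤ 1 :=
  min_le_left _ _

lemma survivalBound_le_div (u : ℝ) : survivalBound R₁ R₂ u ≤ R₂ / u :=
  (min_le_right _ _).trans (min_le_left _ _)

lemma survivalBound_le_div_sq (u : ℝ) : survivalBound R₁ R₂ u ≤ R₁ * R₂ / u ^ 2 :=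
  (min_le_right _ _).trans (min_le_right _ _)

lemma integrableOn_survivalBound (hR₁ : 0 < R₁) (hR₂ : 0 ≤ R₂) :
    IntegrableOn (survivalBound R₁ R₂) (Ioi 0) := by
  rw [← Ioc_union_Ioi_eq_Ioi hR₁.le]
  refine IntegrableOn.union ?_ ?_
  · refine Measure.integrableOn_of_bounded (M := 1) (by simp)
      measurable_survivalBound.aestronglyMeasurable ?_
    filter_upwards [ae_restrict_mem measurableSet_Ioc] with u hu
    rw [norm_of_nonneg (survivalBound_nonneg hR₁.le hR₂ hu.1)]
    exact survivalBound_le_one u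
  · refine (integrableOn_Ioi_const_div_sq (R₁ * R₂) hR₁).mono'
      measurable_survivalBound.aestronglyMeasurable ?_
    filter_upwards [ae_restrict_mem measurableSet_Ioi] with u hu
    rw [norm_of_nonneg (survivalBound_nonneg hR₁.le hR₂ (hR₁.trans hu))]
    exact survivalBound_le_div_sq u

end survivalBound

theorem integral_min_bound (R₁ R₂ : ℝ) (hR₂ : 0 < R₂) (hR : R₂ ≤ R₁) :
    ∫ u in Set.Ioi (0 : ℝ), min 1 (min (R₂ / u) (R₁ * R₂ / u ^ 2))
      ≤ R₂ * (2 + Real.log (R₁ / R₂)) := by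
  have hR₁ : 0 < R₁ := hR₂.trans_le hR
  have hg := integrableOn_survivalBound hR₁ hR₂.le
  change ∫ u in Ioi 0, survivalBound R₁ R₂ u ≤ _
  rw [setIntegral_Ioi_eq_Ioc_add_Ioc_add_Ioi hR₂.le hR hg]
  have hnear : ∫ u in Ioc 0 R₂, survivalBound R₁ R₂ u ≤ R₂ :=
    calc _ ≤ ∫ _ in Ioc 0 R₂, (1 : ℝ) :=
          setIntegral_mono_on (hg.mono_set Ioc_subset_Ioi_self) (integrableOn_const (by simp))
            measurableSet_Ioc fun u _ => survivalBound_le_one u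
      _ = R₂ := by simp [hR₂.le]
  have hmid : ∫ u in Ioc R₂ R₁, survivalBound R₁ R₂ u ≤ R₂ * log (R₁ / R₂) :=
    calc _ ≤ ∫ u in Ioc R₂ R₁, R₂ / u :=
          setIntegral_mono_on (hg.mono_set fun _ hu => hR₂.trans hu.1)
            (integrableOn_Ioc_const_div R₂ hR₂) measurableSet_Ioc
            fun u _ => survivalBound_le_div u
      _ = R₂ * log (R₁ / R₂) := integral_Ioc_const_div R₂ hR₂ hR
  have htail : ∫ u in Ioi R₁, survivalBound R₁ R₂ u ≤ R₂ :=
    calc _ ≤ ∫ u in Ioi R₁, R₁ * R₂ / u ^ 2 :=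
          setIntegral_mono_on (hg.mono_set (Ioi_subset_Ioi hR₁.le))
            (integrableOn_Ioi_const_div_sq _ hR₁) measurableSet_Ioi
            fun u _ => survivalBound_le_div_sq u
      _ = R₂ := by rw [integral_Ioi_const_div_sq _ hR₁]; field_simp
  linarith
end

section
/- Let X, Y be independent nonnegative random variables and suppose R₁, R₂ > 0 satisfy u·P(X>u) ≤ R₁ and u·P(Y>u) ≤ R₂ for all u > 0, with R₁ ≥ R₂. Then for any quantity S satisfying S ≤ R₁ + R₂ + E[min{X,Y}], we have S ≤ R₁ + (3 + ln(R₁/R₂))·R₂. -/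
/-!
Write `m = min X Y`. By the layer-cake formula `E[m] = ∫₀^∞ P(m > t) dt`, and by independence
`P(m > t) = P(X > t) P(Y > t)`, which is at most `1`, at most `R₂ / t`, and at most `R₁ R₂ / t²`.
Using the first bound on `(0, R₂]`, the second on `(R₂, R₁]` and the third on `(R₁, ∞)` gives
`E[m] ≤ R₂ + R₂ log (R₁ / R₂) + R₂`.
-/

open MeasureTheory ProbabilityTheory Set

theorem integral_le_setIntegral_of_meas_lt_le {α : Type*} [MeasurableSpace α] {μ : Measure α}
    {f : α → ℝ} (hf : Integrable f μ) (hf_nonneg : 0 ≤ᵐ[μ] f) {g : ℝ → ℝ}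
    (hg : IntegrableOn g (Ioi 0)) (hle : ∀ t, 0 < t → μ.real {a | t < f a} ≤ g t) :
    ∫ a, f a ∂μ ≤ ∫ t in Ioi 0, g t := by
  rw [hf.integral_eq_integral_meas_lt hf_nonneg]
  exact integral_mono_of_nonneg (.of_forall fun _ ↦ measureReal_nonneg) hg
    ((ae_restrict_iff' measurableSet_Ioi).mpr (.of_forall hle))

noncomputable def minTailProfile (R₁ R₂ t : ℝ) : ℝ :=
  if t ≤ R₂ then 1 else if t ≤ R₁ then R₂ / t else R₁ * R₂ / t ^ 2

theorem measureReal_lt_min_le_minTailProfile {Ω : Type*} [MeasurableSpace Ω] {μ : Measure Ω}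
    [IsProbabilityMeasure μ] {X Y : Ω → ℝ} (hindep : IndepFun X Y μ) {R₁ R₂ : ℝ}
    (hX : ∀ u, 0 < u → u * μ.real {ω | u < X ω} ≤ R₁)
    (hY : ∀ u, 0 < u → u * μ.real {ω | u < Y ω} ≤ R₂) {t : ℝ} (ht : 0 < t) :
    μ.real {ω | t < min (X ω) (Y ω)} ≤ minTailProfile R₁ R₂ t := by
  have hset : {ω | t < min (X ω) (Y ω)} = X ⁻¹' Ioi t ∩ Y ⁻¹' Ioi t := by
    ext ω; simp
  have hXt : μ.real (X ⁻¹' Ioi t) ≤ R₁ / t := by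
    rw [le_div_iff₀' ht]; exact hX t ht
  have hYt : μ.real (Y ⁻¹' Ioi t) ≤ R₂ / t := by
    rw [le_div_iff₀' ht]; exact hY t ht
  unfold minTailProfile
  split_ifs
  · exact measureReal_le_one
  · rw [hset]
    exact (measureReal_mono inter_subset_right).trans hYt
  · rw [hset, measureReal_def,
      hindep.measure_inter_preimage_eq_mul _ _ measurableSet_Ioi measurableSet_Ioi,
      ENNReal.toReal_mul, ← measureReal_def, ← measureReal_def]
    calc μ.real (X ⁻¹' Ioi t) * μ.real (Y ⁻¹' Ioi t) ≤ R₁ / t * (R₂ / t) :=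
          mul_le_mul hXt hYt measureReal_nonneg (measureReal_nonneg.trans hXt)
      _ = R₁ * R₂ / t ^ 2 := by ring

section minTailProfile

variable {R₁ R₂ : ℝ}

theorem minTailProfile_eqOn_Ioc_zero : EqOn (minTailProfile R₁ R₂) 1 (Ioc 0 R₂) :=
  fun _ ht ↦ if_pos ht.2

theorem minTailProfile_eqOn_Ioc : EqOn (minTailProfile R₁ R₂) (fun t ↦ R₂ * t⁻¹) (Ioc R₂ R₁) :=
  fun t ht ↦ by simp [minTailProfile, not_le.mpr ht.1, ht.2, div_eq_mul_inv]

theorem minTailProfile_eqOn_Ioi (hR₁ : 0 < R₁) (hR : R₂ ≤ R₁) :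
    EqOn (minTailProfile R₁ R₂) (fun t ↦ R₁ * R₂ * t ^ (-2 : ℝ)) (Ioi R₁) := fun t ht ↦ by
  have ht' : R₁ < t := ht
  have ht₀ : 0 < t := hR₁.trans ht'
  simp only [minTailProfile, not_le.mpr ht', not_le.mpr (hR.trans_lt ht'), if_false]
  rw [Real.rpow_neg ht₀.le, Real.rpow_two, div_eq_mul_inv]

theorem integrableOn_minTailProfile_Ioc_zero : IntegrableOn (minTailProfile R₁ R₂) (Ioc 0 R₂) :=
  (integrableOn_const measure_Ioc_lt_top.ne).congr_fun minTailProfile_eqOn_Ioc_zero.symm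
    measurableSet_Ioc

theorem integrableOn_minTailProfile_Ioc (hR₂ : 0 < R₂) :
    IntegrableOn (minTailProfile R₁ R₂) (Ioc R₂ R₁) := by
  have hcont : ContinuousOn (fun t : ℝ ↦ R₂ * t⁻¹) (Icc R₂ R₁) :=
    continuousOn_const.mul (continuousOn_inv₀.mono fun t ht ↦ (hR₂.trans_le ht.1).ne')
  exact (hcont.integrableOn_Icc.mono_set Ioc_subset_Icc_self).congr_fun
    minTailProfile_eqOn_Ioc.symm measurableSet_Ioc

theorem integrableOn_minTailProfile_Ioi (hR₁ : 0 < R₁) (hR : R₂ ≤ R₁) :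
    IntegrableOn (minTailProfile R₁ R₂) (Ioi R₁) :=
  IntegrableOn.congr_fun ((integrableOn_Ioi_rpow_of_lt (by norm_num) hR₁).const_mul _)
    (minTailProfile_eqOn_Ioi hR₁ hR).symm measurableSet_Ioi

variable (hR₂ : 0 < R₂) (hR : R₂ ≤ R₁)
include hR₂ hR

theorem integrableOn_minTailProfile : IntegrableOn (minTailProfile R₁ R₂) (Ioi 0) := by
  rw [← Ioc_union_Ioi_eq_Ioi (hR₂.le.trans hR), ← Ioc_union_Ioc_eq_Ioc hR₂.le hR]
  exact (integrableOn_minTailProfile_Ioc_zero.union (integrableOn_minTailProfile_Ioc hR₂)).union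
    (integrableOn_minTailProfile_Ioi (hR₂.trans_le hR) hR)

theorem setIntegral_minTailProfile :
    ∫ t in Ioi 0, minTailProfile R₁ R₂ t = (2 + Real.log (R₁ / R₂)) * R₂ := by
  have hR₁ : 0 < R₁ := hR₂.trans_le hR
  have h₁ : ∫ t in Ioc 0 R₂, minTailProfile R₁ R₂ t = R₂ := by
    rw [setIntegral_congr_fun measurableSet_Ioc minTailProfile_eqOn_Ioc_zero]
    simp [hR₂.le]
  have h₂ : ∫ t in Ioc R₂ R₁, minTailProfile R₁ R₂ t = R₂ * Real.log (R₁ / R₂) := by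
    rw [setIntegral_congr_fun measurableSet_Ioc minTailProfile_eqOn_Ioc,
      ← intervalIntegral.integral_of_le hR, intervalIntegral.integral_const_mul,
      integral_inv_of_pos hR₂ hR₁]
  have h₃ : ∫ t in Ioi R₁, minTailProfile R₁ R₂ t = R₂ := by
    rw [setIntegral_congr_fun measurableSet_Ioi (minTailProfile_eqOn_Ioi hR₁ hR),
      integral_const_mul, integral_Ioi_rpow_of_lt (by norm_num) hR₁,
      show (-2 : ℝ) + 1 = -1 by norm_num, Real.rpow_neg_one]
    field_simp
  rw [← Ioc_union_Ioi_eq_Ioi hR₁.le, setIntegral_union (Ioc_disjoint_Ioi le_rfl) measurableSet_Ioi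
      ((integrableOn_minTailProfile hR₂ hR).mono_set Ioc_subset_Ioi_self)
      (integrableOn_minTailProfile_Ioi hR₁ hR),
    ← Ioc_union_Ioc_eq_Ioc hR₂.le hR, setIntegral_union (Ioc_disjoint_Ioc_of_le le_rfl)
      measurableSet_Ioc integrableOn_minTailProfile_Ioc_zero (integrableOn_minTailProfile_Ioc hR₂),
    h₁, h₂, h₃]
  ring

end minTailProfile

theorem integral_min_le_of_indepFun {Ω : Type*} [MeasurableSpace Ω] {μ : Measure Ω}
    [IsProbabilityMeasure μ] {X Y : Ω → ℝ} (hXnn : ∀ ω, 0 ≤ X ω) (hYnn : ∀ ω, 0 ≤ Y ω)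
    (hindep : IndepFun X Y μ) (hint : Integrable (fun ω ↦ min (X ω) (Y ω)) μ) {R₁ R₂ : ℝ}
    (hR₂ : 0 < R₂) (hR : R₂ ≤ R₁) (hX : ∀ u, 0 < u → u * μ.real {ω | u < X ω} ≤ R₁)
    (hY : ∀ u, 0 < u → u * μ.real {ω | u < Y ω} ≤ R₂) :
    ∫ ω, min (X ω) (Y ω) ∂μ ≤ (2 + Real.log (R₁ / R₂)) * R₂ := by
  rw [← setIntegral_minTailProfile hR₂ hR]
  exact integral_le_setIntegral_of_meas_lt_le hint
    (.of_forall fun ω ↦ le_min (hXnn ω) (hYnn ω)) (integrableOn_minTailProfile hR₂ hR)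
    fun _ ↦ measureReal_lt_min_le_minTailProfile hindep hX hY

theorem revenue_additive_bound_general
    {Ω : Type*} [MeasurableSpace Ω] (μ : Measure Ω) [IsProbabilityMeasure μ]
    (X Y : Ω → ℝ)
    (hXnn : ∀ ω, 0 ≤ X ω) (hYnn : ∀ ω, 0 ≤ Y ω)
    (hindep : ProbabilityTheory.IndepFun X Y μ)
    (hint : Integrable (fun ω => min (X ω) (Y ω)) μ)
    (R₁ R₂ : ℝ) (hR₂ : 0 < R₂) (hR : R₂ ≤ R₁)
    (hX' : ∀ u : ℝ, 0 < u → u * (μ {ω | u < X ω}).toReal ≤ R₁)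
    (hY' : ∀ u : ℝ, 0 < u → u * (μ {ω | u < Y ω}).toReal ≤ R₂)
    (S : ℝ) (hS : S ≤ R₁ + R₂ + ∫ ω, min (X ω) (Y ω) ∂μ) :
    S ≤ R₁ + (3 + Real.log (R₁ / R₂)) * R₂ := by
  have hmin := integral_min_le_of_indepFun hXnn hYnn hindep hint hR₂ hR hX' hY'
  linarith

theorem revenue_additive_bound
    {Ω : Type*} [MeasurableSpace Ω] (μ : Measure Ω) [IsProbabilityMeasure μ]
    (X Y : Ω → ℝ) (hX : Measurable X) (hY : Measurable Y)
    (hXnn : ∀ ω, 0 ≤ X ω) (hYnn : ∀ ω, 0 ≤ Y ω)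
    (hindep : ProbabilityTheory.IndepFun X Y μ)
    (hint : Integrable (fun ω => min (X ω) (Y ω)) μ)
    (R₁ R₂ : ℝ) (hR₂ : 0 < R₂) (hR : R₂ ≤ R₁)
    (hX' : ∀ u : ℝ, 0 < u → u * (μ {ω | u < X ω}).toReal ≤ R₁)
    (hY' : ∀ u : ℝ, 0 < u → u * (μ {ω | u < Y ω}).toReal ≤ R₂)
    (S : ℝ) (hS : S ≤ R₁ + R₂ + ∫ ω, min (X ω) (Y ω) ∂μ) :
    S ≤ R₁ + (3 + Real.log (R₁ / R₂)) * R₂ :=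
  revenue_additive_bound_general μ X Y hXnn hYnn hindep hint R₁ R₂ hR₂ hR hX' hY' S hS
end
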